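/- Let s ∈ ℂ with 2s ∉ ℤ, let 0 ≤ ℓ ≤ n, and let λ, μ ∈ Λ_{s^ℓ}(n). Then λ ≈ μ if and only if wt(λ) = wt(μ) and Σ_{i=1}^n λ_i = Σ_{i=1}^n μ_i. -/

import Mathlib

/-!
Write `λ ∈ Λ_{s^ℓ}(n)` as `λ_i = s + f_i` on the first `ℓ` coordinates and `λ_i = -(s + f_i)` on
the others, with `f` integral. As `2s ∉ ℤ`, the group `W_λ` consists of the permutations preserving
the two blocks, a root `α` with `(λ, ᾱ) = 0` joins the two blocks at coordinates with equal values
of `f`, and `wt(λ)` is the signed count of the values of `f`. Block-preserving permutations and the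
shifts `λ ↦ λ - kα` change neither this signed count nor `∑ λ_i`.

Conversely, if `wt(λ) = wt(μ)`, with `μ` given by `g`, then `f` on the first block together with
`g` on the second takes the same values, with multiplicities, as `g` on the first block together
with `f` on the second. A permutation `σ` witnessing this sends some indices `i` of the first block
out of it, giving pairs `(i, σ i)` of `λ` with equal values of `f`, and equally many indices `j`
of the second block into the first one, giving pairs `(σ j, j)` of `μ` with equal values of `g`.
Matching the two families of pairs turns `σ` into a block-preserving permutation, and shifting
every pair of `λ` to the value of its partner in `μ` produces the integers `k`.
-/

open Finset

noncomputable section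

/-- The `i`-th standard basis vector of `ℂ^n`. -/
def eps (n : ℕ) (i : Fin n) : Fin n → ℂ := fun t => if t = i then 1 else 0

/-- The standard symmetric bilinear form on `ℂ^n`. -/
def pform {n : ℕ} (x y : Fin n → ℂ) : ℂ := ∑ i, x i * y i

/-- The integral Weyl group `W_λ`: the subgroup of `S_n` generated by the transpositions
`s_{ij}` with `λ_i - λ_j ∈ ℤ`. -/
def IntegralWeyl (n : ℕ) (lam : Fin n → ℂ) : Subgroup (Equiv.Perm (Fin n)) :=
  Subgroup.closure
    {σ | ∃ i j : Fin n, i ≠ j ∧ (∃ m : ℤ, lam i - lam j = (m : ℂ)) ∧ σ = Equiv.swap i j}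

/-- The relation `λ ≈ μ`: there are `w ∈ W_λ`, finitely many pairwise orthogonal roots
`α_t = ε_{a t} - ε_{b t}` with `(λ, ᾱ_t) = 0`, and integers `k_t`, such that
`μ = w (λ - ∑_t k_t α_t)`. -/
def approx (n : ℕ) (lam mu : Fin n → ℂ) : Prop :=
  ∃ w ∈ IntegralWeyl n lam, ∃ (N : ℕ) (a b : Fin N → Fin n) (k : Fin N → ℤ),
    (∀ t, a t ≠ b t) ∧
    (∀ t t', t ≠ t' →
      pform (eps n (a t) - eps n (b t)) (eps n (a t') - eps n (b t')) = 0) ∧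
    (∀ t, pform lam (eps n (a t) + eps n (b t)) = 0) ∧
    mu = (lam - ∑ t, (k t : ℂ) • (eps n (a t) - eps n (b t))) ∘ w

/-- Membership in `Λ_{s^ℓ}(n)` (indices written `0`-based: the first `ℓ` coordinates are
congruent to `s` mod `ℤ`, the remaining ones to `-s`). -/
def InLambda (n ℓ : ℕ) (s : ℂ) (lam : Fin n → ℂ) : Prop :=
  ∀ i : Fin n, (i.val < ℓ → ∃ m : ℤ, lam i - s = (m : ℂ)) ∧
    (ℓ ≤ i.val → ∃ m : ℤ, lam i + s = (m : ℂ))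

open scoped Classical in
/-- The weight function `wt(λ) : ℤ → ℤ` of `λ ∈ Λ_{s^ℓ}(n)`:
`wt(λ) = ∑_{i ≤ ℓ} δ_{λ_i - s} - ∑_{i > ℓ} δ_{-λ_i - s}`. -/
def wtFn (n ℓ : ℕ) (s : ℂ) (lam : Fin n → ℂ) : ℤ → ℤ := fun a =>
  (∑ i ∈ Finset.univ.filter (fun i : Fin n => i.val < ℓ),
      if lam i - s = (a : ℂ) then 1 else 0)
  - ∑ i ∈ Finset.univ.filter (fun i : Fin n => ℓ ≤ i.val),
      if -lam i - s = (a : ℂ) then 1 else 0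

section Swaps

variable {α : Type*} [Finite α] [DecidableEq α]

theorem mem_closure_swaps_iff {r : α → α → Prop} (hr : Equivalence r) {σ : Equiv.Perm α} :
    σ ∈ Subgroup.closure {τ | ∃ i j, i ≠ j ∧ r i j ∧ τ = Equiv.swap i j} ↔ ∀ i, r (σ i) i := by
  constructor
  · intro h
    induction h using Subgroup.closure_induction with
    | mem τ hτ =>
      obtain ⟨i, j, -, hij, rfl⟩ := hτ
      intro x
      rcases eq_or_ne x i with rfl | hxi
      · simpa using hr.symm hij
      rcases eq_or_ne x j with rfl | hxj
      · simpa using hij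
      · rw [Equiv.swap_apply_of_ne_of_ne hxi hxj]
        exact hr.refl x
    | one => exact hr.refl
    | mul x y _ _ hx hy => exact fun i => hr.trans (hx (y i)) (hy i)
    | inv x _ hx => exact fun i => hr.symm (by simpa using hx (x⁻¹ i))
  · intro h
    refine (mem_closure_isSwap ?_).2 ⟨Set.toFinite _, fun x => ?_⟩
    · rintro _ ⟨i, j, hij, -, rfl⟩
      exact ⟨i, j, hij, rfl⟩
    refine ⟨⟨Equiv.swap x (σ x), ?_⟩, Equiv.swap_apply_left x (σ x)⟩
    by_cases hx : x = σ x
    · rw [← hx, Equiv.swap_self]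
      exact one_mem _
    · exact Subgroup.subset_closure ⟨x, σ x, hx, hr.symm (h x), rfl⟩

end Swaps

theorem mem_integralWeyl_iff {n : ℕ} {lam : Fin n → ℂ} {w : Equiv.Perm (Fin n)} :
    w ∈ IntegralWeyl n lam ↔ ∀ i, ∃ m : ℤ, lam (w i) - lam i = m :=
  mem_closure_swaps_iff
    { refl := fun i => ⟨0, by simp⟩
      symm := fun ⟨m, hm⟩ => ⟨-m, by push_cast; rw [← hm]; ring⟩
      trans := fun ⟨m, hm⟩ ⟨m', hm'⟩ => ⟨m + m', by push_cast; rw [← hm, ← hm']; ring⟩ }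

def toLambda {n : ℕ} (ℓ : ℕ) (s : ℂ) (f : Fin n → ℤ) : Fin n → ℂ :=
  fun i => if i.val < ℓ then s + f i else -(s + f i)

section Coordinates

variable {n ℓ : ℕ} {s : ℂ}

theorem InLambda.exists_eq_toLambda {lam : Fin n → ℂ} (h : InLambda n ℓ s lam) :
    ∃ f : Fin n → ℤ, lam = toLambda ℓ s f := by
  choose F hF using fun i => (h i).1
  choose G hG using fun i => (h i).2
  refine ⟨fun i => if hi : i.val < ℓ then F i hi else -G i (not_lt.1 hi), funext fun i => ?_⟩
  by_cases hi : i.val < ℓ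
  · simp only [toLambda, hi, dif_pos, if_true]
    linear_combination hF i hi
  · simp only [toLambda, hi, dif_neg, if_false, not_false_eq_true]
    push_cast
    linear_combination hG i (not_lt.1 hi)

theorem toLambda_comp (f : Fin n → ℤ) {w : Equiv.Perm (Fin n)}
    (hw : ∀ i, (w i).val < ℓ ↔ i.val < ℓ) : toLambda ℓ s f ∘ w = toLambda ℓ s (f ∘ w) :=
  funext fun i => by simp [toLambda, hw]

theorem toLambda_sub_toLambda_eq_int_of_iff (f : Fin n → ℤ) {i j : Fin n}
    (h : i.val < ℓ ↔ j.val < ℓ) : ∃ m : ℤ, toLambda ℓ s f i - toLambda ℓ s f j = m := by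
  by_cases hi : i.val < ℓ
  · exact ⟨f i - f j, by simp [toLambda, hi, h.1 hi]⟩
  · exact ⟨f j - f i, by simp [toLambda, hi, mt h.2 hi]; ring⟩

theorem iff_of_toLambda_sub_toLambda_eq_int (hs : ∀ m : ℤ, 2 * s ≠ (m : ℂ)) (f : Fin n → ℤ)
    {i j : Fin n} {m : ℤ} (h : toLambda ℓ s f i - toLambda ℓ s f j = m) :
    i.val < ℓ ↔ j.val < ℓ := by
  by_cases hi : i.val < ℓ <;> by_cases hj : j.val < ℓ
  · simp [hi, hj]
  · simp only [toLambda, hi, hj, if_true, if_false] at h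
    exact (hs (m - f i - f j) (by push_cast; linear_combination h)).elim
  · simp only [toLambda, hi, hj, if_true, if_false] at h
    exact (hs (-m - f i - f j) (by push_cast; linear_combination -h)).elim
  · simp [hi, hj]

theorem lt_iff_not_lt_of_toLambda_add_toLambda_eq_zero (hs : ∀ m : ℤ, 2 * s ≠ (m : ℂ))
    (f : Fin n → ℤ) {i j : Fin n} (h : toLambda ℓ s f i + toLambda ℓ s f j = 0) :
    i.val < ℓ ↔ ¬ j.val < ℓ := by
  by_cases hi : i.val < ℓ <;> by_cases hj : j.val < ℓ
  · simp only [toLambda, hi, hj, if_true] at h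
    exact (hs (-f i - f j) (by push_cast; linear_combination h)).elim
  · simp [hi, hj]
  · simp [hi, hj]
  · simp only [toLambda, hi, hj, if_false] at h
    exact (hs (-f i - f j) (by push_cast; linear_combination -h)).elim

theorem mem_integralWeyl_toLambda_iff (hs : ∀ m : ℤ, 2 * s ≠ (m : ℂ)) (f : Fin n → ℤ)
    {w : Equiv.Perm (Fin n)} :
    w ∈ IntegralWeyl n (toLambda ℓ s f) ↔ ∀ i, ((w i).val < ℓ ↔ i.val < ℓ) := by
  rw [mem_integralWeyl_iff]
  exact forall_congr' fun i => ⟨fun ⟨_, hm⟩ => iff_of_toLambda_sub_toLambda_eq_int hs f hm,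
    toLambda_sub_toLambda_eq_int_of_iff f⟩

end Coordinates

section Roots

variable {n N : ℕ}

theorem eps_eq_single (i : Fin n) : eps n i = Pi.single i 1 := by
  ext t
  simp [eps, Pi.single_apply]

theorem pform_eps_add_eps (x : Fin n → ℂ) (i j : Fin n) :
    pform x (eps n i + eps n j) = x i + x j := by
  change x ⬝ᵥ _ = _
  simp [eps_eq_single, dotProduct_add]

theorem pform_roots_eq_zero_iff {a b c d : Fin n} (hab : a ≠ b) (hcd : c ≠ d) :
    pform (eps n a - eps n b) (eps n c - eps n d) = 0 ↔ a ≠ c ∧ a ≠ d ∧ b ≠ c ∧ b ≠ d := by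
  change (eps n a - eps n b) ⬝ᵥ (eps n c - eps n d) = 0 ↔ _
  simp only [eps_eq_single, sub_dotProduct, dotProduct_sub, single_dotProduct, Pi.single_apply,
    one_mul]
  split_ifs <;> simp_all
  all_goals norm_num

theorem pairwise_orthogonal_roots_iff {a b : Fin N → Fin n} (hab : ∀ t, a t ≠ b t) :
    (∀ t t', t ≠ t' →
        pform (eps n (a t) - eps n (b t)) (eps n (a t') - eps n (b t')) = 0) ↔
      Function.Injective (Sum.elim a b) := by
  simp only [pform_roots_eq_zero_iff (hab _) (hab _), Sum.elim_injective]
  refine ⟨fun h => ⟨fun t t' e => ?_, fun t t' e => ?_, fun t t' => ?_⟩,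
    fun ⟨ha, hb, hab'⟩ t t' htt' => ⟨ha.ne htt', hab' t t', fun e => hab' t' t e.symm, hb.ne htt'⟩⟩
  · by_contra htt'; exact (h t t' htt').1 e
  · by_contra htt'; exact (h t t' htt').2.2.2 e
  · rcases eq_or_ne t t' with rfl | htt'
    · exact hab t
    · exact (h t t' htt').2.1

def rootCombination (a b : Fin N → Fin n) (k : Fin N → ℤ) : Fin n → ℂ :=
  ∑ t, (k t : ℂ) • (eps n (a t) - eps n (b t))

theorem rootCombination_apply (a b : Fin N → Fin n) (k : Fin N → ℤ) (j : Fin n) :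
    rootCombination a b k j =
      ∑ t, (k t : ℂ) * ((if j = a t then 1 else 0) - (if j = b t then 1 else 0)) := by
  simp [rootCombination, eps]

theorem sum_rootCombination (a b : Fin N → Fin n) (k : Fin N → ℤ) :
    ∑ j, rootCombination a b k j = 0 := by
  simp [rootCombination_apply, Finset.sum_comm (γ := Fin n), mul_sub, Finset.sum_sub_distrib]

theorem rootCombination_apply_of_notMem {a b : Fin N → Fin n} (k : Fin N → ℤ) {j : Fin n}
    (hj : j ∉ Set.range (Sum.elim a b)) : rootCombination a b k j = 0 := by
  simp only [Set.Sum.elim_range, Set.mem_union, Set.mem_range, not_or, not_exists] at hj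
  simp [rootCombination_apply, fun t => Ne.symm (hj.1 t), fun t => Ne.symm (hj.2 t)]

variable {a b : Fin N → Fin n}

theorem rootCombination_apply_left (he : Function.Injective (Sum.elim a b)) (k : Fin N → ℤ)
    (t : Fin N) : rootCombination a b k (a t) = k t := by
  obtain ⟨ha, -, hab⟩ := Sum.elim_injective.1 he
  rw [rootCombination_apply, Finset.sum_eq_single t]
  · simp [hab t t]
  · intro t' _ ht'
    simp [ha.ne ht'.symm, hab t t']
  · simp

theorem rootCombination_apply_right (he : Function.Injective (Sum.elim a b)) (k : Fin N → ℤ)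
    (t : Fin N) : rootCombination a b k (b t) = -k t := by
  obtain ⟨-, hb, hab⟩ := Sum.elim_injective.1 he
  rw [rootCombination_apply, Finset.sum_eq_single t]
  · simp [(hab t t).symm]
  · intro t' _ ht'
    simp [hb.ne ht'.symm, (hab t' t).symm]
  · simp

end Roots

theorem Fintype.sum_congr_pairs {ι κ M : Type*} [Fintype ι] [Fintype κ] [AddCommGroup M]
    {a b : κ → ι} (he : Function.Injective (Sum.elim a b)) {F G : ι → M}
    (hoff : ∀ j ∉ Set.range (Sum.elim a b), F j = G j)
    (hpair : ∀ t, F (a t) + F (b t) = G (a t) + G (b t)) : ∑ j, F j = ∑ j, G j := by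
  rw [← sub_eq_zero, ← Finset.sum_sub_distrib, ← Fintype.sum_of_injective _ he
    (fun x => F (Sum.elim a b x) - G (Sum.elim a b x)) _ (fun j hj => sub_eq_zero.2 (hoff j hj))
    (fun _ => rfl), Fintype.sum_sum_type, ← Finset.sum_add_distrib]
  refine Finset.sum_eq_zero fun t _ => ?_
  simp only [Sum.elim_inl, Sum.elim_inr]
  rw [sub_add_sub_comm, hpair, sub_self]

open scoped Classical in
def wtTerm (p : Prop) [Decidable p] (s : ℂ) (x : ℤ) (z : ℂ) : ℤ :=
  if p then (if z - s = x then 1 else 0) else -(if -z - s = x then 1 else 0)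

theorem wtTerm_add_wtTerm_neg {p q : Prop} [Decidable p] [Decidable q] (h : p ↔ ¬q) (s : ℂ)
    (x : ℤ) (z : ℂ) : wtTerm p s x z + wtTerm q s x (-z) = 0 := by
  by_cases hp : p
  · simp [wtTerm, hp, h.1 hp]
  · simp [wtTerm, hp, show q by tauto]

section Weight

variable {n ℓ : ℕ} {s : ℂ}

theorem wtFn_eq_sum (lam : Fin n → ℂ) :
    wtFn n ℓ s lam = fun x => ∑ i, wtTerm (i.val < ℓ) s x (lam i) := by
  funext x
  simp only [wtFn, Finset.sum_filter, ← Finset.sum_sub_distrib]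
  refine Finset.sum_congr rfl fun i _ => ?_
  by_cases hi : i.val < ℓ <;> simp [wtTerm, hi]

theorem wtFn_comp (lam : Fin n → ℂ) {w : Equiv.Perm (Fin n)}
    (hw : ∀ i, (w i).val < ℓ ↔ i.val < ℓ) : wtFn n ℓ s (lam ∘ w) = wtFn n ℓ s lam := by
  funext x
  simp only [wtFn_eq_sum, Function.comp_apply]
  rw [← Equiv.sum_comp w (fun i => wtTerm (i.val < ℓ) s x (lam i))]
  simp only [hw]

theorem wtFn_sub_rootCombination {N : ℕ} {a b : Fin N → Fin n} (lam : Fin n → ℂ)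
    (he : Function.Injective (Sum.elim a b)) (hcross : ∀ t, (a t).val < ℓ ↔ ¬(b t).val < ℓ)
    (hpair : ∀ t, lam (a t) + lam (b t) = 0) (k : Fin N → ℤ) :
    wtFn n ℓ s (lam - rootCombination a b k) = wtFn n ℓ s lam := by
  funext x
  simp only [wtFn_eq_sum]
  refine Fintype.sum_congr_pairs he (fun j hj => by
    simp [rootCombination_apply_of_notMem k hj]) fun t => ?_
  have hb : lam (b t) = -lam (a t) := eq_neg_of_add_eq_zero_right (hpair t)
  simp only [Pi.sub_apply, rootCombination_apply_left he, rootCombination_apply_right he, hb,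
    show -lam (a t) - -(k t : ℂ) = -(lam (a t) - k t) by ring, wtTerm_add_wtTerm_neg (hcross t)]

end Weight

theorem approx.sum_eq {n : ℕ} {lam mu : Fin n → ℂ} (h : approx n lam mu) :
    ∑ i, lam i = ∑ i, mu i := by
  obtain ⟨w, -, N, a, b, k, -, -, -, rfl⟩ := h
  change _ = ∑ i, (lam - rootCombination a b k) (w i)
  rw [Equiv.sum_comp w (lam - rootCombination a b k)]
  simp [Finset.sum_sub_distrib, sum_rootCombination]

theorem approx.wtFn_eq {n ℓ : ℕ} {s : ℂ} (hs : ∀ m : ℤ, 2 * s ≠ (m : ℂ)) {f : Fin n → ℤ}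
    {mu : Fin n → ℂ} (h : approx n (toLambda ℓ s f) mu) :
    wtFn n ℓ s (toLambda ℓ s f) = wtFn n ℓ s mu := by
  obtain ⟨w, hw, N, a, b, k, hab, horth, hpair, rfl⟩ := h
  have hpair' : ∀ t, toLambda ℓ s f (a t) + toLambda ℓ s f (b t) = 0 := fun t => by
    rw [← pform_eps_add_eps]
    exact hpair t
  have hcross : ∀ t, (a t).val < ℓ ↔ ¬(b t).val < ℓ := fun t =>
    lt_iff_not_lt_of_toLambda_add_toLambda_eq_zero hs f (hpair' t)
  change _ = wtFn n ℓ s ((toLambda ℓ s f - rootCombination a b k) ∘ w)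
  rw [wtFn_comp _ ((mem_integralWeyl_toLambda_iff hs f).1 hw),
    wtFn_sub_rootCombination _ ((pairwise_orthogonal_roots_iff hab).1 horth) hcross hpair']

section Pairing

variable {ι : Type*}

theorem exists_perm_apply_eq_of_card_fiber_eq [Fintype ι] {β : Type*} [DecidableEq β]
    {p q : ι → β} (h : ∀ x, #{i | p i = x} = #{i | q i = x}) :
    ∃ σ : Equiv.Perm ι, ∀ i, q (σ i) = p i :=
  ⟨Equiv.ofFiberEquiv fun x => Fintype.equivOfCardEq <| by
    rw [Fintype.card_subtype, Fintype.card_subtype, h], Equiv.ofFiberEquiv_map _⟩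

variable (P : ι → Prop) [DecidablePred P]

def signedCount [Fintype ι] (f : ι → ℤ) (x : ℤ) : ℤ :=
  ∑ i, if f i = x then (if P i then 1 else -1) else 0

theorem exists_perm_of_signedCount_eq [Fintype ι] {f g : ι → ℤ}
    (h : signedCount P f = signedCount P g) :
    ∃ σ : Equiv.Perm ι, ∀ i,
      (if P (σ i) then g (σ i) else f (σ i)) = if P i then f i else g i := by
  refine exists_perm_apply_eq_of_card_fiber_eq (p := fun i => if P i then f i else g i)
    (q := fun i => if P i then g i else f i) fun x => ?_
  have hx := sub_eq_zero.2 (congrFun h x)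
  zify
  rw [← sub_eq_zero, ← hx]
  simp only [signedCount, Finset.card_filter, Nat.cast_sum, ← Finset.sum_sub_distrib]
  refine Finset.sum_congr rfl fun i _ => ?_
  by_cases hi : P i <;> by_cases hf : f i = x <;> by_cases hg : g i = x <;> simp [hi, hf, hg]

variable {P}

theorem exists_perm_eq_on_and_inv_off {π : Equiv.Perm ι} (hπ : ∀ i, P (π i) ↔ P i) :
    ∃ u : Equiv.Perm ι, (∀ i, P i → u i = π i) ∧ ∀ i, ¬P i → u i = π⁻¹ i := by
  have hπ' : ∀ i, ¬P (π⁻¹ i) ↔ ¬P i := fun i => by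
    rw [not_iff_not, ← hπ]
    simp
  exact ⟨(π.subtypePerm hπ).subtypeCongr (π⁻¹.subtypePerm hπ'),
    fun i hi => Equiv.Perm.subtypeCongr.left_apply _ _ hi,
    fun i hi => Equiv.Perm.subtypeCongr.right_apply _ _ hi⟩

section Crossing

variable [Fintype ι] (P) (σ : Equiv.Perm ι)

def crossOut : Finset ι := {i | P i ∧ ¬P (σ i)}

def crossIn : Finset ι := {i | ¬P i ∧ P (σ i)}

variable {P σ} in
theorem mem_crossOut {i : ι} : i ∈ crossOut P σ ↔ P i ∧ ¬P (σ i) := by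
  simp [crossOut]

variable {P σ} in
theorem mem_crossIn {i : ι} : i ∈ crossIn P σ ↔ ¬P i ∧ P (σ i) := by
  simp [crossIn]

theorem card_crossOut : #(crossOut P σ) = #(crossIn P σ) := by
  classical
  have hcard : #{i | P i} = #{i | P (σ i)} := by
    rw [← Fintype.card_subtype, ← Fintype.card_subtype]
    exact Fintype.card_congr (σ.subtypeEquiv fun _ => Iff.rfl).symm
  convert Finset.card_sdiff_comm hcard using 2 <;> ext i <;>
    simp [mem_crossOut, mem_crossIn, and_comm]

theorem disjoint_crossOut_crossIn : Disjoint (crossOut P σ) (crossIn P σ) := by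
  simp only [Finset.disjoint_left, mem_crossOut, mem_crossIn]
  tauto

end Crossing

variable [DecidableEq ι]

def exchange {A B : Finset ι} (e : A ≃ B) (i : ι) : ι :=
  if h : i ∈ A then e ⟨i, h⟩ else if h' : i ∈ B then e.symm ⟨i, h'⟩ else i

section Exchange

variable {A B : Finset ι} (e : A ≃ B) {i : ι}

theorem exchange_of_mem_left (h : i ∈ A) : exchange e i = e ⟨i, h⟩ := dif_pos h

theorem exchange_of_mem_right (hAB : Disjoint A B) (h : i ∈ B) :
    exchange e i = e.symm ⟨i, h⟩ := by
  rw [exchange, dif_neg (Finset.disjoint_right.1 hAB h), dif_pos h]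

theorem exchange_of_notMem (hA : i ∉ A) (hB : i ∉ B) : exchange e i = i := by
  simp [exchange, hA, hB]

theorem involutive_exchange (hAB : Disjoint A B) : Function.Involutive (exchange e) := by
  intro i
  by_cases hA : i ∈ A
  · rw [exchange_of_mem_left e hA, exchange_of_mem_right e hAB (e _).2]
    simp
  by_cases hB : i ∈ B
  · rw [exchange_of_mem_right e hAB hB, exchange_of_mem_left e (e.symm _).2]
    simp
  · rw [exchange_of_notMem e hA hB, exchange_of_notMem e hA hB]

end Exchange

theorem apply_exchange_crossing_iff [Fintype ι] {σ : Equiv.Perm ι}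
    (e : crossOut P σ ≃ crossIn P σ) (i : ι) : P (σ (exchange e i)) ↔ P i := by
  by_cases hA : i ∈ crossOut P σ
  · rw [exchange_of_mem_left e hA]
    have := mem_crossIn.1 (e ⟨i, hA⟩).2
    have := mem_crossOut.1 hA
    tauto
  by_cases hB : i ∈ crossIn P σ
  · rw [exchange_of_mem_right e (disjoint_crossOut_crossIn P σ) hB]
    have := mem_crossOut.1 (e.symm ⟨i, hB⟩).2
    have := mem_crossIn.1 hB
    tauto
  · rw [exchange_of_notMem e hA hB]
    rw [mem_crossOut] at hA
    rw [mem_crossIn] at hB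
    tauto

theorem exists_perm_preserving_of_perm [Fintype ι] {f g : ι → ℤ} (σ : Equiv.Perm ι)
    (hσ : ∀ i, (if P (σ i) then g (σ i) else f (σ i)) = if P i then f i else g i) :
    ∃ u : Equiv.Perm ι, (∀ i, P (u i) ↔ P i) ∧ (∀ i ∈ crossOut P σ, g (u i) = g (u (σ i))) ∧
      ∀ j, j ∉ crossOut P σ → σ⁻¹ j ∉ crossOut P σ → g (u j) = f j := by
  have e : crossOut P σ ≃ crossIn P σ := Fintype.equivOfCardEq (by simp [card_crossOut])
  set io := (involutive_exchange e (disjoint_crossOut_crossIn P σ)).toPerm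
  have hπ : ∀ i, P ((σ * io) i) ↔ P i := apply_exchange_crossing_iff e
  obtain ⟨u, hu, hu'⟩ := exists_perm_eq_on_and_inv_off hπ
  have hu_neg : ∀ i, ¬P i → u i = io (σ⁻¹ i) := fun i hi => by
    rw [hu' i hi, mul_inv_rev, Equiv.Perm.mul_apply, Equiv.Perm.inv_def io,
      Function.Involutive.toPerm_symm]
  refine ⟨u, fun i => ?_, fun i hi => ?_, fun j hjA hjσA => ?_⟩
  · by_cases hPi : P i
    · rw [hu i hPi]
      exact hπ i
    · rw [hu' i hPi, ← hπ]
      simp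
  · have hc := mem_crossIn.1 (e ⟨i, hi⟩).2
    rw [hu _ (mem_crossOut.1 hi).1, hu_neg _ (mem_crossOut.1 hi).2, Equiv.Perm.mul_apply]
    simp only [io, Function.Involutive.coe_toPerm, Equiv.Perm.coe_inv, Equiv.symm_apply_apply,
      exchange_of_mem_left e hi]
    simpa [hc.1, hc.2] using hσ (e ⟨i, hi⟩)
  rw [mem_crossOut] at hjA hjσA
  by_cases hPj : P j
  · have hPσj : P (σ j) := by tauto
    have hjB : j ∉ crossIn P σ := fun h => (mem_crossIn.1 h).1 hPj
    rw [hu j hPj, Equiv.Perm.mul_apply]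
    simp only [io, Function.Involutive.coe_toPerm,
      exchange_of_notMem e (mt mem_crossOut.1 hjA) hjB]
    simpa [hPj, hPσj] using hσ j
  · obtain ⟨m, rfl⟩ := σ.surjective j
    simp only [Equiv.Perm.coe_inv, Equiv.symm_apply_apply] at hjσA
    have hPm : ¬P m := fun h => hjσA ⟨h, hPj⟩
    have hmB : m ∉ crossIn P σ := fun h => hPj (mem_crossIn.1 h).2
    rw [hu_neg _ hPj]
    simp only [io, Function.Involutive.coe_toPerm, Equiv.Perm.coe_inv, Equiv.symm_apply_apply,
      exchange_of_notMem e (mt mem_crossOut.1 hjσA) hmB]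
    simpa [hPj, hPm] using (hσ m).symm

theorem exists_pairing_of_perm [Fintype ι] {f g : ι → ℤ} (σ : Equiv.Perm ι)
    (hσ : ∀ i, (if P (σ i) then g (σ i) else f (σ i)) = if P i then f i else g i) :
    ∃ (u : Equiv.Perm ι) (N : ℕ) (a b : Fin N → ι), (∀ i, P (u i) ↔ P i) ∧
      Function.Injective (Sum.elim a b) ∧ (∀ t, P (a t) ∧ ¬P (b t)) ∧
      (∀ t, f (a t) = f (b t)) ∧ (∀ t, g (u (a t)) = g (u (b t))) ∧
      ∀ j ∉ Set.range (Sum.elim a b), g (u j) = f j := by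
  obtain ⟨u, hu, hpair, hoff⟩ := exists_perm_preserving_of_perm σ hσ
  set A := crossOut P σ
  set a : Fin #A → ι := fun t => A.equivFin.symm t
  have ha : ∀ t, a t ∈ A := fun t => (A.equivFin.symm t).2
  have ha_inj : Function.Injective a := fun t t' h => A.equivFin.symm.injective (Subtype.ext h)
  have ha_surj : ∀ i ∈ A, ∃ t, a t = i := fun i hi => ⟨A.equivFin ⟨i, hi⟩, by simp [a]⟩
  refine ⟨u, #A, a, σ ∘ a, hu, ?_, fun t => mem_crossOut.1 (ha t), fun t => ?_,
    fun t => hpair _ (ha t), fun j hj => hoff j (fun h => hj ?_) (fun h => hj ?_)⟩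
  · refine Sum.elim_injective.2 ⟨ha_inj, σ.injective.comp ha_inj, fun t t' h => ?_⟩
    have hσa : σ (a t') = a t := h.symm
    exact (mem_crossOut.1 (ha t')).2 (hσa ▸ (mem_crossOut.1 (ha t)).1)
  · simpa [(mem_crossOut.1 (ha t)).1, (mem_crossOut.1 (ha t)).2] using (hσ (a t)).symm
  · obtain ⟨t, rfl⟩ := ha_surj j h
    exact ⟨Sum.inl t, rfl⟩
  · obtain ⟨t, ht⟩ := ha_surj _ h
    exact ⟨Sum.inr t, by simp [ht]⟩

end Pairing

theorem wtFn_toLambda {n ℓ : ℕ} (s : ℂ) (f : Fin n → ℤ) :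
    wtFn n ℓ s (toLambda ℓ s f) = signedCount (fun i : Fin n => i.val < ℓ) f := by
  funext x
  rw [wtFn_eq_sum]
  refine Finset.sum_congr rfl fun i _ => ?_
  by_cases hi : i.val < ℓ <;> by_cases hf : f i = x <;> simp [wtTerm, toLambda, hi, hf]

theorem toLambda_sub_rootCombination {n ℓ N : ℕ} {s : ℂ} {f h : Fin n → ℤ}
    {a b : Fin N → Fin n} (he : Function.Injective (Sum.elim a b))
    (hcross : ∀ t, (a t).val < ℓ ∧ ¬(b t).val < ℓ) (hf : ∀ t, f (a t) = f (b t))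
    (hh : ∀ t, h (a t) = h (b t)) (hoff : ∀ j ∉ Set.range (Sum.elim a b), h j = f j) :
    toLambda ℓ s f - rootCombination a b (fun t => f (a t) - h (a t)) = toLambda ℓ s h := by
  funext j
  by_cases hj : j ∈ Set.range (Sum.elim a b)
  · obtain ⟨t | t, rfl⟩ := hj
    · simp [rootCombination_apply_left he, toLambda, (hcross t).1]
      ring
    · simp [rootCombination_apply_right he, toLambda, (hcross t).2, hf t, hh t]
      ring
  · simp [rootCombination_apply_of_notMem _ hj, toLambda, hoff j hj]

theorem approx_toLambda_of_wtFn_eq {n ℓ : ℕ} {s : ℂ} {f g : Fin n → ℤ}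
    (h : wtFn n ℓ s (toLambda ℓ s f) = wtFn n ℓ s (toLambda ℓ s g)) :
    approx n (toLambda ℓ s f) (toLambda ℓ s g) := by
  rw [wtFn_toLambda, wtFn_toLambda] at h
  obtain ⟨σ, hσ⟩ := exists_perm_of_signedCount_eq _ h
  obtain ⟨u, N, a, b, hu, he, hcross, hf, hg, hoff⟩ :=
    exists_pairing_of_perm (P := fun i : Fin n => i.val < ℓ) σ hσ
  have hu_inv : ∀ i, (u⁻¹ i).val < ℓ ↔ i.val < ℓ := fun i => by simpa using (hu (u⁻¹ i)).symm
  have hab : ∀ t, a t ≠ b t := fun t => he.ne Sum.inl_ne_inr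
  refine ⟨u⁻¹, mem_integralWeyl_iff.2 fun i => toLambda_sub_toLambda_eq_int_of_iff f (hu_inv i),
    N, a, b, fun t => f (a t) - g (u (a t)), hab, (pairwise_orthogonal_roots_iff hab).2 he,
    fun t => ?_, ?_⟩
  · rw [pform_eps_add_eps]
    simp [toLambda, (hcross t).1, (hcross t).2, hf t]
  · have hν := toLambda_sub_rootCombination (s := s) (h := g ∘ u) he hcross hf hg hoff
    simp only [Function.comp_apply] at hν
    change toLambda ℓ s g = (toLambda ℓ s f - rootCombination a b _) ∘ ⇑u⁻¹
    rw [hν, toLambda_comp _ hu_inv]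
    simp [Function.comp_def]

theorem stmt12_general {n ℓ : ℕ} (s : ℂ) (hs : ∀ m : ℤ, 2 * s ≠ (m : ℂ))
    (lam mu : Fin n → ℂ) (h1 : InLambda n ℓ s lam) (h2 : InLambda n ℓ s mu) :
    approx n lam mu ↔
      (wtFn n ℓ s lam = wtFn n ℓ s mu ∧ ∑ i, lam i = ∑ i, mu i) := by
  obtain ⟨f, rfl⟩ := h1.exists_eq_toLambda
  obtain ⟨g, rfl⟩ := h2.exists_eq_toLambda
  exact ⟨fun h => ⟨h.wtFn_eq hs, h.sum_eq⟩, fun h => approx_toLambda_of_wtFn_eq h.1⟩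

/-- For `2s ∉ ℤ` and `λ, μ ∈ Λ_{s^ℓ}(n)`: `λ ≈ μ` if and only if
`wt(λ) = wt(μ)` and `∑ λ_i = ∑ μ_i`. -/
theorem stmt12 {n ℓ : ℕ} (hl : ℓ ≤ n) (s : ℂ) (hs : ∀ m : ℤ, 2 * s ≠ (m : ℂ))
    (lam mu : Fin n → ℂ) (h1 : InLambda n ℓ s lam) (h2 : InLambda n ℓ s mu) :
    approx n lam mu ↔
      (wtFn n ℓ s lam = wtFn n ℓ s mu ∧ ∑ i, lam i = ∑ i, mu i) :=
  stmt12_general s hs lam mu h1 h2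

end
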